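/- arXiv:1108.5699 — 3 statements merged into one kernel-verified Lean document; each statement's English description precedes it below -/
import Mathlib

section
/- Let δ, ε > 0 and let J^μ be a weighted graph such that s(K2; J^μ) ≤ δ and μ({u : uv ∈ E(J)}) ≤ ε for every vertex v ∈ V(J). Let Z = (z1, …, zr) be r vertices of J chosen independently at random according to μ. Then for every integer s ≥ 1, the probability that there is a chosen position a and s other chosen positions b1, …, bs such that the vertex at a is adjacent in J to the vertices at each of b1, …, bs (i.e., the sampled induced subgraph contains a vertex of degree at least s) is at most 3^r · δ · ε^{s−1}. -/
open Finset
open scoped Classical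

def IsStrongHom {α β : Type} (H : SimpleGraph α) (G : SimpleGraph β) (φ : α → β) : Prop :=
  ∀ u v : α, H.Adj u v ↔ G.Adj (φ u) (φ v)

def SimpleGraph.blowup {α : Type} (H : SimpleGraph α) (k : α → ℕ) :
    SimpleGraph (Σ v : α, Fin (k v)) where
  Adj x y := H.Adj x.1 y.1
  symm := ⟨fun _ _ h => H.adj_symm h⟩
  loopless := ⟨fun x h => H.irrefl (v := x.1) h⟩

def IsWeight {β : Type} [Fintype β] (μ : β → ℝ) : Prop :=
  (∀ v, 0 < μ v) ∧ ∑ v, μ v = 1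

noncomputable def sdensity {α β : Type} [Fintype α] [Fintype β]
    (H : SimpleGraph α) (G : SimpleGraph β) (μ : β → ℝ) : ℝ :=
  ∑ ψ : α → β, if IsStrongHom H G ψ then ∏ v : α, μ (ψ v) else 0

def IsTwinFree {α : Type} (G : SimpleGraph α) : Prop :=
  ∀ u v : α, (∀ w, G.Adj u w ↔ G.Adj v w) → u = v

def WEquiv {α β : Type} [Fintype α] [Fintype β]
    (G1 : SimpleGraph α) (μ1 : α → ℝ) (G2 : SimpleGraph β) (μ2 : β → ℝ) : Prop :=
  ∃ (m : ℕ) (T : SimpleGraph (Fin m)) (π1 : α → Fin m) (π2 : β → Fin m),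
    IsTwinFree T ∧ IsStrongHom G1 T π1 ∧ IsStrongHom G2 T π2 ∧
    Function.Surjective π1 ∧ Function.Surjective π2 ∧
    ∀ t : Fin m,
      (∑ u ∈ Finset.univ.filter (fun u => π1 u = t), μ1 u) =
        ∑ u ∈ Finset.univ.filter (fun u => π2 u = t), μ2 u

noncomputable def d1dist {α β : Type} [Fintype α] [Fintype β]
    (G1 : SimpleGraph α) (μ1 : α → ℝ) (G2 : SimpleGraph β) (μ2 : β → ℝ) : ℝ :=
  sInf {x : ℝ | ∃ (m : ℕ) (F1 F2 : SimpleGraph (Fin m)) (μ : Fin m → ℝ),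
    IsWeight μ ∧ WEquiv F1 μ G1 μ1 ∧ WEquiv F2 μ G2 μ2 ∧
    x = ∑ u : Fin m, ∑ v : Fin m, μ u * μ v *
      |(if F1.Adj u v then (1:ℝ) else 0) - (if F2.Adj u v then (1:ℝ) else 0)|}

noncomputable def sdensityP {α β : Type} [Fintype α] [Fintype β]
    (H : SimpleGraph α) (u0 : α) (G : SimpleGraph β) (v0 : β) (μ : β → ℝ) : ℝ :=
  ∑ ψ : α → β, if ψ u0 = v0 ∧ IsStrongHom H G ψ
    then ∏ v ∈ Finset.univ.erase u0, μ (ψ v) else 0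

def GraphBalanced {α : Type} [Fintype α] (H : SimpleGraph α) : Prop :=
  ∃ (m : ℕ) (Ht : SimpleGraph (Fin m)) (k : Fin m → ℕ),
    (∀ v, 0 < k v) ∧ IsTwinFree Ht ∧ Nonempty (H ≃g Ht.blowup k) ∧
    ∀ σ : Ht ≃g Ht, ∀ v, k (σ v) = k v


/-!
Union bound over the centre `a` and the set `B` of `s` leaves of a star in the sample. For fixed
`a ∉ B`, summing out the coordinates shows that `z a` is adjacent to every `z b`, `b ∈ B`, with
probability `∑ v, μ v * N v ^ s`, where `N v ≤ ε` is the `μ`-measure of the neighbourhood of `v`.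
This is at most `ε ^ (s - 1) * ∑ v, μ v * N v = ε ^ (s - 1) * s(K₂; J^μ) ≤ δ * ε ^ (s - 1)`, and
there are `r * (r - 1).choose s ≤ 3 ^ r` choices of `(a, B)`.
-/

theorem isStrongHom_completeGraph_fin_two_iff {β : Type} (J : SimpleGraph β) (ψ : Fin 2 → β) :
    IsStrongHom (SimpleGraph.completeGraph (Fin 2)) J ψ ↔ J.Adj (ψ 0) (ψ 1) := by
  refine ⟨fun h => (h 0 1).1 (by simp), fun h u v => ?_⟩
  fin_cases u <;> fin_cases v <;> simp [h, h.symm]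

theorem sum_mul_pow_le {β : Type} (S : Finset β) {μ f : β → ℝ} {ε : ℝ} (hμ : ∀ v ∈ S, 0 ≤ μ v)
    (hf : ∀ v ∈ S, 0 ≤ f v) (hfε : ∀ v ∈ S, f v ≤ ε) {s : ℕ} (hs : 1 ≤ s) :
    ∑ v ∈ S, μ v * f v ^ s ≤ (∑ v ∈ S, μ v * f v) * ε ^ (s - 1) := by
  obtain ⟨k, rfl⟩ : ∃ k, s = k + 1 := ⟨s - 1, by omega⟩
  rw [Finset.sum_mul]
  refine Finset.sum_le_sum fun v hv => ?_
  calc μ v * f v ^ (k + 1) = μ v * f v * f v ^ k := by ring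
    _ ≤ μ v * f v * ε ^ (k + 1 - 1) := by
        rw [Nat.add_sub_cancel]
        gcongr
        exacts [mul_nonneg (hμ v hv) (hf v hv), hf v hv, hfε v hv]

theorem exists_mem_powersetCard_of_injective {ι : Type} [Fintype ι] [DecidableEq ι]
    {R : ι → ι → Prop} {s : ℕ}
    (h : ∃ (a : ι) (b : Fin s → ι), Function.Injective b ∧ (∀ i, b i ≠ a) ∧ ∀ i, R a (b i)) :
    ∃ a, ∃ B ∈ (univ.erase a).powersetCard s, ∀ b ∈ B, R a b := by
  obtain ⟨a, b, hinj, hne, hR⟩ := h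
  refine ⟨a, univ.image b, Finset.mem_powersetCard.2 ⟨?_, ?_⟩, ?_⟩
  · simpa [Finset.subset_iff] using hne
  · simp [Finset.card_image_of_injective _ hinj]
  · simpa using hR

theorem Nat.succ_mul_two_pow_le_three_pow (m : ℕ) : (m + 1) * 2 ^ m ≤ 3 ^ (m + 1) := by
  induction m with
  | zero => norm_num
  | succ m ih =>
    have h23 : 2 ^ (m + 1) ≤ 3 ^ (m + 1) := Nat.pow_le_pow_left (by norm_num) _
    calc (m + 1 + 1) * 2 ^ (m + 1) = 2 * ((m + 1) * 2 ^ m) + 2 ^ (m + 1) := by ring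
      _ ≤ 2 * 3 ^ (m + 1) + 3 ^ (m + 1) := by gcongr
      _ = 3 ^ (m + 1 + 1) := by ring

theorem Nat.mul_choose_pred_le_three_pow (n k : ℕ) : n * (n - 1).choose k ≤ 3 ^ n := by
  cases n with
  | zero => simp
  | succ m =>
    calc (m + 1) * (m + 1 - 1).choose k ≤ (m + 1) * 2 ^ m := by
          rw [Nat.add_sub_cancel]; gcongr; exact Nat.choose_le_two_pow m k
      _ ≤ 3 ^ (m + 1) := Nat.succ_mul_two_pow_le_three_pow m

noncomputable def neighborWeight {β : Type} [Fintype β] (J : SimpleGraph β) (μ : β → ℝ)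
    (v : β) : ℝ :=
  ∑ u ∈ univ.filter (fun u => J.Adj v u), μ u

theorem neighborWeight_nonneg {β : Type} [Fintype β] (J : SimpleGraph β) {μ : β → ℝ}
    (hμ : ∀ v, 0 ≤ μ v) (v : β) : 0 ≤ neighborWeight J μ v :=
  Finset.sum_nonneg fun u _ => hμ u

theorem sdensity_completeGraph_fin_two {β : Type} [Fintype β] (J : SimpleGraph β) (μ : β → ℝ) :
    sdensity (SimpleGraph.completeGraph (Fin 2)) J μ = ∑ v, μ v * neighborWeight J μ v := by
  unfold sdensity
  simp_rw [isStrongHom_completeGraph_fin_two_iff, Fin.prod_univ_two]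
  calc _ = ∑ p : β × β, if J.Adj p.1 p.2 then μ p.1 * μ p.2 else 0 := by
        -- `convert` reconciles the classical `DecidableEq (Fin 2)` behind the sum in `sdensity`
        convert Fintype.sum_equiv (piFinTwoEquiv fun _ => β) _ _ (fun _ => rfl) using 3; rfl
    _ = _ := by
        simp only [Fintype.sum_prod_type, neighborWeight, Finset.sum_filter, Finset.mul_sum]
        simp

section Star

variable {ι β : Type} [Fintype ι] [DecidableEq ι] (J : SimpleGraph β)

noncomputable def starWeight (μ : β → ℝ) (a : ι) (B : Finset ι) (z : ι → β) : ℝ :=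
  if ∀ b ∈ B, J.Adj (z a) (z b) then ∏ i, μ (z i) else 0

theorem starWeight_nonneg {μ : β → ℝ} (hμ : ∀ v, 0 ≤ μ v) (a : ι) (B : Finset ι) (z : ι → β) :
    0 ≤ starWeight J μ a B z := by
  unfold starWeight
  split_ifs
  exacts [Finset.prod_nonneg fun i _ => hμ (z i), le_rfl]

theorem sum_starWeight_eq [Fintype β] {μ : β → ℝ} (hμ : ∑ v, μ v = 1) {a : ι} {B : Finset ι}
    (haB : a ∉ B) :
    ∑ z : ι → β, starWeight J μ a B z = ∑ v, μ v * neighborWeight J μ v ^ #B := by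
  -- Once the centre is pinned to `z a = v`, the weight factors over the coordinates.
  let w (v : β) (i : ι) (x : β) : ℝ :=
    if (i = a → x = v) ∧ (i ∈ B → J.Adj v x) then μ x else 0
  have hw (v : β) (i : ι) : ∑ x, w v i x =
      (if i = a then μ v else 1) * (if i ∈ B then neighborWeight J μ v else 1) := by
    by_cases hia : i = a
    · subst hia
      simp [w, haB]
    · by_cases hiB : i ∈ B
      · simp [w, hia, hiB, neighborWeight, Finset.sum_filter]
      · simp [w, hia, hiB, hμ]
  calc _ = ∑ z : ι → β, ∑ v, ∏ i, w v i (z i) := by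
        refine Finset.sum_congr rfl fun z _ => ?_
        simp only [starWeight, w, Finset.prod_ite_zero, Finset.mem_univ, true_implies, forall_eq,
          ite_and, Finset.sum_ite_eq, if_true]
    _ = ∑ v, ∏ i, ∑ x, w v i x := by rw [Finset.sum_comm]; simp_rw [Fintype.prod_sum]
    _ = _ := by
        refine Finset.sum_congr rfl fun v _ => ?_
        simp only [hw, Finset.prod_mul_distrib, Finset.prod_ite_eq', Finset.mem_univ, if_true,
          Finset.prod_ite_mem, Finset.univ_inter, Finset.prod_const]

theorem sum_starWeight_le [Fintype β] {μ : β → ℝ} (hμ : IsWeight μ) {ε : ℝ}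
    (hN : ∀ v, neighborWeight J μ v ≤ ε) {a : ι} {B : Finset ι} (haB : a ∉ B) (hB : B.Nonempty) :
    ∑ z : ι → β, starWeight J μ a B z ≤
      (∑ v, μ v * neighborWeight J μ v) * ε ^ (#B - 1) := by
  have hμ0 (v : β) : 0 ≤ μ v := (hμ.1 v).le
  rw [sum_starWeight_eq J hμ.2 haB]
  exact sum_mul_pow_le _ (fun v _ => hμ0 v) (fun v _ => neighborWeight_nonneg J hμ0 v)
    (fun v _ => hN v) hB.card_pos

theorem prod_le_sum_starWeight {μ : β → ℝ} (hμ : ∀ v, 0 ≤ μ v) {s : ℕ} {z : ι → β}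
    (h : ∃ (a : ι) (b : Fin s → ι), Function.Injective b ∧ (∀ i, b i ≠ a) ∧
      ∀ i, J.Adj (z a) (z (b i))) :
    ∏ i, μ (z i) ≤ ∑ a, ∑ B ∈ (univ.erase a).powersetCard s, starWeight J μ a B z := by
  obtain ⟨a, B, hB, hadj⟩ :=
    exists_mem_powersetCard_of_injective (R := fun a b => J.Adj (z a) (z b)) h
  calc ∏ i, μ (z i) = starWeight J μ a B z := (if_pos hadj).symm
    _ ≤ ∑ B ∈ (univ.erase a).powersetCard s, starWeight J μ a B z :=
        Finset.single_le_sum (fun B _ => starWeight_nonneg J hμ a B z) hB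
    _ ≤ _ := Finset.single_le_sum (f := fun a => ∑ B ∈ (univ.erase a).powersetCard s,
          starWeight J μ a B z)
        (fun a _ => Finset.sum_nonneg fun B _ => starWeight_nonneg J hμ a B z) (Finset.mem_univ a)

end Star

theorem stmt5_general {β : Type} [Fintype β] (J : SimpleGraph β) (μ : β → ℝ) (hμ : IsWeight μ)
    (δ ε : ℝ) (hε : 0 < ε)
    (hedge : sdensity (SimpleGraph.completeGraph (Fin 2)) J μ ≤ δ)
    (hdeg : ∀ v : β, ∑ u ∈ Finset.univ.filter (fun u => J.Adj v u), μ u ≤ ε)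
    (r s : ℕ) (hs : 1 ≤ s) :
    ∑ z : Fin r → β,
      (if ∃ (a : Fin r) (b : Fin s → Fin r), Function.Injective b ∧ (∀ i, b i ≠ a) ∧
            ∀ i, J.Adj (z a) (z (b i))
        then ∏ i : Fin r, μ (z i) else 0) ≤ 3 ^ r * δ * ε ^ (s - 1) := by
  have hμ0 (v : β) : 0 ≤ μ v := (hμ.1 v).le
  rw [sdensity_completeGraph_fin_two] at hedge
  set D := ∑ v, μ v * neighborWeight J μ v
  have hDε : 0 ≤ D * ε ^ (s - 1) :=
    mul_nonneg (Finset.sum_nonneg fun v _ => mul_nonneg (hμ0 v) (neighborWeight_nonneg J hμ0 v))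
      (by positivity)
  calc _ ≤ ∑ z : Fin r → β, ∑ a, ∑ B ∈ (univ.erase a).powersetCard s, starWeight J μ a B z := by
        refine Finset.sum_le_sum fun z _ => ?_
        split_ifs with h
        · exact prod_le_sum_starWeight J hμ0 h
        · exact Finset.sum_nonneg fun a _ => Finset.sum_nonneg fun B _ =>
            starWeight_nonneg J hμ0 a B z
    _ = ∑ a, ∑ B ∈ (univ.erase a).powersetCard s, ∑ z : Fin r → β, starWeight J μ a B z := by
        rw [Finset.sum_comm]; simp_rw [Finset.sum_comm (s := univ (α := Fin r → β))]
    _ ≤ ∑ a : Fin r, ∑ B ∈ (univ.erase a).powersetCard s, D * ε ^ (s - 1) := by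
        refine Finset.sum_le_sum fun a _ => Finset.sum_le_sum fun B hB => ?_
        obtain ⟨hBa, rfl⟩ := Finset.mem_powersetCard.1 hB
        exact sum_starWeight_le J hμ hdeg (fun ha => Finset.notMem_erase a univ (hBa ha))
          (Finset.card_pos.1 hs)
    _ = (r * (r - 1).choose s : ℕ) * (D * ε ^ (s - 1)) := by simp [mul_assoc]
    _ ≤ 3 ^ r * (D * ε ^ (s - 1)) := by
        gcongr; exact_mod_cast Nat.mul_choose_pred_le_three_pow r s
    _ ≤ 3 ^ r * δ * ε ^ (s - 1) := by rw [mul_assoc]; gcongr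

theorem stmt5 {β : Type} [Fintype β] (J : SimpleGraph β) (μ : β → ℝ) (hμ : IsWeight μ)
    (δ ε : ℝ) (hδ : 0 < δ) (hε : 0 < ε)
    (hedge : sdensity (SimpleGraph.completeGraph (Fin 2)) J μ ≤ δ)
    (hdeg : ∀ v : β, ∑ u ∈ Finset.univ.filter (fun u => J.Adj v u), μ u ≤ ε)
    (r s : ℕ) (hs : 1 ≤ s) :
    ∑ z : Fin r → β,
      (if ∃ (a : Fin r) (b : Fin s → Fin r), Function.Injective b ∧ (∀ i, b i ≠ a) ∧
            ∀ i, J.Adj (z a) (z (b i))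
        then ∏ i : Fin r, μ (z i) else 0) ≤ 3 ^ r * δ * ε ^ (s - 1) :=
  stmt5_general J μ hμ δ ε hε hedge hdeg r s hs
end

section
/- Let H̃ be a twin-free graph with |V(H̃)| = k, let k be a vector of positive integers indexed by V(H̃), let n be a positive integer, let G = H̃^(n·k), and let ψ: V(G) → V(H̃) be any map. Then for every γ > 0, either (a) there exists a set X ⊆ V(G) with |X| ≤ γ|V(G)| such that the restriction of ψ to V(G) − X is a strong homomorphism from G[V(G) − X] to H̃, or (b) there exist sets Y1, Y2 ⊆ V(G) with |Y1|, |Y2| ≥ (γ · α(μ_k) / k) · |V(G)| such that for all y1 ∈ Y1 and y2 ∈ Y2, A_G(y1, y2) ≠ A_{H̃}(ψ(y1), ψ(y2)). -/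
open Finset
open scoped Classical

/-
Sort the vertices of the blow-up into the cells `{u | u.1 = a, ψ u = b}`, one for each pair
`(a, b)` of vertices of `H̃`. Adjacency in the blow-up is read off the first coordinate, so if two
cells `(a, b)` and `(a', b')` with `H̃.Adj a a' ↔ H̃.Adj b b'` false both have at least `t`
vertices, they are the sets `Y1`, `Y2` of (b). Otherwise every pair of large cells is consistent
with `ψ`, and the union `X` of the small cells works for (a): there are at most `|V(H̃)|²` of them,
so `|X| ≤ |V(H̃)|² t`, which is at most `γ |V(G)|` for
`t = γ α(μ_k) / |V(H̃)| · |V(G)|` since `|V(H̃)| · min k ≤ ‖k‖₁`.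
-/

section JointFiber

variable {V β : Type} [Fintype V]

noncomputable def jointFiber (π ψ : V → β) (a b : β) : Finset V :=
  univ.filter fun u => π u = a ∧ ψ u = b

theorem mem_jointFiber {π ψ : V → β} {a b : β} {u : V} :
    u ∈ jointFiber π ψ a b ↔ π u = a ∧ ψ u = b := by
  simp [jointFiber]

theorem mem_jointFiber_self (π ψ : V → β) (u : V) : u ∈ jointFiber π ψ (π u) (ψ u) :=
  mem_jointFiber.2 ⟨rfl, rfl⟩

noncomputable def smallJointFibers [Fintype β] (π ψ : V → β) (t : ℝ) : Finset V :=
  (univ.filter fun p : β × β => (#(jointFiber π ψ p.1 p.2) : ℝ) < t).biUnion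
    fun p => jointFiber π ψ p.1 p.2

theorem le_card_jointFiber_of_notMem_smallJointFibers [Fintype β] {π ψ : V → β} {t : ℝ} {u : V}
    (hu : u ∉ smallJointFibers π ψ t) : t ≤ #(jointFiber π ψ (π u) (ψ u)) := by
  by_contra! hlt
  exact hu <| mem_biUnion.2 ⟨(π u, ψ u), mem_filter.2 ⟨mem_univ _, hlt⟩, mem_jointFiber_self π ψ u⟩

theorem card_smallJointFibers_le [Fintype β] (π ψ : V → β) {t : ℝ} (ht : 0 ≤ t) :
    (#(smallJointFibers π ψ t) : ℝ) ≤ Fintype.card β ^ 2 * t := by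
  set P := univ.filter fun p : β × β => (#(jointFiber π ψ p.1 p.2) : ℝ) < t
  calc (#(smallJointFibers π ψ t) : ℝ) ≤ ∑ p ∈ P, (#(jointFiber π ψ p.1 p.2) : ℝ) := by
        unfold smallJointFibers
        exact_mod_cast card_biUnion_le
    _ ≤ #P * t := by
        simpa using sum_le_card_nsmul P _ t fun p hp => (mem_filter.1 hp).2.le
    _ ≤ #(univ : Finset (β × β)) * t := by
        gcongr
        exact subset_univ P
    _ = Fintype.card β ^ 2 * t := by
        simp [sq]

end JointFiber

theorem isStrongHom_blowup_fst {α : Type} (H : SimpleGraph α) (k : α → ℕ) :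
    IsStrongHom (H.blowup k) H Sigma.fst :=
  fun _ _ => Iff.rfl

theorem IsStrongHom.exists_small_exceptional_set_or_exists_large_mismatch
    {V β : Type} [Fintype V] [Fintype β] {G : SimpleGraph V} {H : SimpleGraph β} {π : V → β}
    (hπ : IsStrongHom G H π) (ψ : V → β) {t : ℝ} (ht : 0 ≤ t) :
    (∃ X : Finset V, (#X : ℝ) ≤ Fintype.card β ^ 2 * t ∧
        ∀ u v : V, u ∉ X → v ∉ X → (G.Adj u v ↔ H.Adj (ψ u) (ψ v))) ∨
    (∃ Y1 Y2 : Finset V, t ≤ #Y1 ∧ t ≤ #Y2 ∧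
        ∀ y1 ∈ Y1, ∀ y2 ∈ Y2, ¬(G.Adj y1 y2 ↔ H.Adj (ψ y1) (ψ y2))) := by
  by_cases hmismatch : ∃ a b a' b', t ≤ #(jointFiber π ψ a b) ∧ t ≤ #(jointFiber π ψ a' b') ∧
      ¬(H.Adj a a' ↔ H.Adj b b')
  · obtain ⟨a, b, a', b', hab, ha'b', hne⟩ := hmismatch
    refine .inr ⟨_, _, hab, ha'b', fun y1 hy1 y2 hy2 => ?_⟩
    obtain ⟨hπ1, hψ1⟩ := mem_jointFiber.1 hy1
    obtain ⟨hπ2, hψ2⟩ := mem_jointFiber.1 hy2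
    rwa [hπ y1 y2, hπ1, hπ2, hψ1, hψ2]
  · push Not at hmismatch
    refine .inl ⟨smallJointFibers π ψ t, card_smallJointFibers_le π ψ ht, fun u v hu hv => ?_⟩
    rw [hπ u v]
    exact hmismatch _ _ _ _ (le_card_jointFiber_of_notMem_smallJointFibers hu)
      (le_card_jointFiber_of_notMem_smallJointFibers hv)

theorem card_mul_inf'_le_sum {β : Type} [Fintype β] [Nonempty β] (k : β → ℕ) :
    (Fintype.card β : ℝ) * (univ.inf' univ_nonempty k : ℕ) ≤ ∑ v : β, (k v : ℝ) := by
  simpa using card_nsmul_le_sum univ (fun v => (k v : ℝ)) ((univ.inf' univ_nonempty k : ℕ) : ℝ)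
    fun v _ => Nat.cast_le.2 (inf'_le k (mem_univ v))

theorem stmt6_general {β : Type} [Fintype β] [Nonempty β] (Ht : SimpleGraph β)
    (k : β → ℕ) (n : ℕ)
    (ψ : (Σ v : β, Fin (n * k v)) → β) (γ : ℝ) (hγ : 0 < γ) :
    (∃ X : Finset (Σ v : β, Fin (n * k v)),
        (X.card : ℝ) ≤ γ * Fintype.card (Σ v : β, Fin (n * k v)) ∧
        ∀ u v : (Σ v : β, Fin (n * k v)), u ∉ X → v ∉ X →
          ((Ht.blowup fun v => n * k v).Adj u v ↔ Ht.Adj (ψ u) (ψ v))) ∨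
    (∃ Y1 Y2 : Finset (Σ v : β, Fin (n * k v)),
        γ * (((Finset.univ.inf' Finset.univ_nonempty k : ℕ) : ℝ) / (∑ v : β, (k v : ℝ))) /
            (Fintype.card β) * Fintype.card (Σ v : β, Fin (n * k v)) ≤ Y1.card ∧
        γ * (((Finset.univ.inf' Finset.univ_nonempty k : ℕ) : ℝ) / (∑ v : β, (k v : ℝ))) /
            (Fintype.card β) * Fintype.card (Σ v : β, Fin (n * k v)) ≤ Y2.card ∧
        ∀ y1 ∈ Y1, ∀ y2 ∈ Y2,
          ¬((Ht.blowup fun v => n * k v).Adj y1 y2 ↔ Ht.Adj (ψ y1) (ψ y2))) := by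
  set B : ℝ := (Fintype.card β : ℝ)
  set N : ℝ := (Fintype.card (Σ v : β, Fin (n * k v)) : ℝ)
  set ratio : ℝ := ((univ.inf' univ_nonempty k : ℕ) : ℝ) / ∑ v : β, (k v : ℝ)
  have hB : 0 < B := Nat.cast_pos.2 Fintype.card_pos
  have hratio : B * ratio ≤ 1 := by
    rw [← mul_div_assoc]
    exact div_le_one_of_le₀ (card_mul_inf'_le_sum k) (by positivity)
  have hbound : B ^ 2 * (γ * ratio / B * N) ≤ γ * N := by
    have heq : B ^ 2 * (γ * ratio / B * N) = γ * N * (B * ratio) := by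
      field_simp
    rw [heq]
    exact mul_le_of_le_one_right (by positivity) hratio
  have hdich := (isStrongHom_blowup_fst Ht fun v => n * k v)
    |>.exists_small_exceptional_set_or_exists_large_mismatch ψ
      (by positivity : 0 ≤ γ * ratio / B * N)
  exact hdich.imp (fun ⟨X, hX, hψ⟩ => ⟨X, hX.trans hbound, hψ⟩) id

theorem stmt6 {β : Type} [Fintype β] [Nonempty β] (Ht : SimpleGraph β)
    (htf : IsTwinFree Ht) (k : β → ℕ) (hk : ∀ v, 0 < k v) (n : ℕ) (hn : 0 < n)
    (ψ : (Σ v : β, Fin (n * k v)) → β) (γ : ℝ) (hγ : 0 < γ) :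
    (∃ X : Finset (Σ v : β, Fin (n * k v)),
        (X.card : ℝ) ≤ γ * Fintype.card (Σ v : β, Fin (n * k v)) ∧
        ∀ u v : (Σ v : β, Fin (n * k v)), u ∉ X → v ∉ X →
          ((Ht.blowup fun v => n * k v).Adj u v ↔ Ht.Adj (ψ u) (ψ v))) ∨
    (∃ Y1 Y2 : Finset (Σ v : β, Fin (n * k v)),
        γ * (((Finset.univ.inf' Finset.univ_nonempty k : ℕ) : ℝ) / (∑ v : β, (k v : ℝ))) /
            (Fintype.card β) * Fintype.card (Σ v : β, Fin (n * k v)) ≤ Y1.card ∧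
        γ * (((Finset.univ.inf' Finset.univ_nonempty k : ℕ) : ℝ) / (∑ v : β, (k v : ℝ))) /
            (Fintype.card β) * Fintype.card (Σ v : β, Fin (n * k v)) ≤ Y2.card ∧
        ∀ y1 ∈ Y1, ∀ y2 ∈ Y2,
          ¬((Ht.blowup fun v => n * k v).Adj y1 y2 ↔ Ht.Adj (ψ y1) (ψ y2))) :=
  stmt6_general Ht k n ψ γ hγ
end

section
/- For every finite simple graph H and all weighted graphs G1^μ1 and G2^μ2, one has |s(H; G1^μ1) − s(H; G2^μ2)| ≤ |V(H)|² · d1(G1^μ1, G2^μ2). -/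
open Finset
open scoped Classical

/-!
Both sides only depend on weighted graphs up to equivalence: a strong homomorphism onto the
twin-free quotient that preserves the masses of the twin classes pushes the product measure on
maps `V(H) → V(G)` forward without changing the strong-homomorphism density. So it suffices to
compare commensurable graphs `F1`, `F2` on one weighted vertex set. A map that is a strong
homomorphism into exactly one of them sends some ordered pair of vertices of `H` to a pair on
which `F1` and `F2` disagree; for distinct vertices of `H` the images are independent
`μ`-distributed vertices, so each of the `|V(H)|²` pairs contributes at most the `d₁`-objective
of `F1`, `F2`. Taking the infimum over commensurable pairs (which exist: pull both graphs back
to the product `V(G1) × V(G2)` with the product weight) gives the bound.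
-/

lemma sum_mul_prod_comp_eq {α β γ R : Type} [Fintype α] [Fintype β] [Fintype γ] [DecidableEq γ]
    [CommSemiring R] (π : β → γ) (μ : β → R) (c : (α → γ) → R) :
    ∑ ψ : α → β, c (π ∘ ψ) * ∏ v, μ (ψ v) =
      ∑ χ : α → γ, c χ * ∏ v, ∑ u ∈ univ.filter (fun u => π u = χ v), μ u := by
  rw [← sum_fiberwise univ (π ∘ ·)]
  refine sum_congr rfl fun χ _ => ?_
  rw [prod_univ_sum, mul_sum]
  refine sum_nbij' id id ?_ ?_ (fun _ _ => rfl) (fun _ _ => rfl) ?_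
  · simp [funext_iff]
  · simp [funext_iff]
  · rintro ψ hψ
    rw [(mem_filter.1 hψ).2, id]

lemma IsStrongHom.comp_iff {α β γ : Type} {H : SimpleGraph α} {G : SimpleGraph β}
    {T : SimpleGraph γ} {π : β → γ} (hπ : IsStrongHom G T π) (ψ : α → β) :
    IsStrongHom H T (π ∘ ψ) ↔ IsStrongHom H G ψ :=
  forall₂_congr fun u v => iff_congr Iff.rfl (hπ (ψ u) (ψ v)).symm

lemma sdensity_eq_sum_fiber {α β γ : Type} [Fintype α] [Fintype β] [Fintype γ] [DecidableEq γ]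
    (H : SimpleGraph α) {G : SimpleGraph β} {T : SimpleGraph γ} {π : β → γ}
    (hπ : IsStrongHom G T π) (μ : β → ℝ) :
    sdensity H G μ = ∑ χ : α → γ, (if IsStrongHom H T χ then 1 else 0) *
      ∏ v, ∑ u ∈ univ.filter (fun u => π u = χ v), μ u := by
  rw [← sum_mul_prod_comp_eq π μ (fun χ => if IsStrongHom H T χ then 1 else 0), sdensity]
  simp only [hπ.comp_iff, boole_mul]

lemma WEquiv.sdensity_eq {α β γ : Type} [Fintype α] [Fintype β] [Fintype γ]
    (H : SimpleGraph α) {G1 : SimpleGraph β} {μ1 : β → ℝ} {G2 : SimpleGraph γ} {μ2 : γ → ℝ}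
    (h : WEquiv G1 μ1 G2 μ2) : sdensity H G1 μ1 = sdensity H G2 μ2 := by
  obtain ⟨m, T, π1, π2, -, hπ1, hπ2, -, -, hfiber⟩ := h
  simp only [sdensity_eq_sum_fiber H hπ1, sdensity_eq_sum_fiber H hπ2, hfiber]

noncomputable def adjDiff {β : Type} (F1 F2 : SimpleGraph β) (a b : β) : ℝ :=
  |(if F1.Adj a b then (1:ℝ) else 0) - (if F2.Adj a b then (1:ℝ) else 0)|

-- the quantity minimised in `d1dist`
noncomputable def weightedL1Dist {β : Type} [Fintype β] (F1 F2 : SimpleGraph β) (μ : β → ℝ) :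
    ℝ :=
  ∑ a, ∑ b, μ a * μ b * adjDiff F1 F2 a b

lemma adjDiff_nonneg {β : Type} (F1 F2 : SimpleGraph β) (a b : β) : 0 ≤ adjDiff F1 F2 a b :=
  abs_nonneg _

@[simp]
lemma adjDiff_self {β : Type} (F1 F2 : SimpleGraph β) (a : β) : adjDiff F1 F2 a a = 0 := by
  simp [adjDiff]

lemma adjDiff_eq_one {β : Type} {F1 F2 : SimpleGraph β} {a b : β}
    (h : ¬(F1.Adj a b ↔ F2.Adj a b)) : adjDiff F1 F2 a b = 1 := by
  by_cases h1 : F1.Adj a b <;> by_cases h2 : F2.Adj a b <;> simp_all [adjDiff]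

lemma weightedL1Dist_nonneg {β : Type} [Fintype β] (F1 F2 : SimpleGraph β) {μ : β → ℝ}
    (hμ : ∀ b, 0 ≤ μ b) : 0 ≤ weightedL1Dist F1 F2 μ :=
  sum_nonneg fun a _ => sum_nonneg fun b _ =>
    mul_nonneg (mul_nonneg (hμ a) (hμ b)) (adjDiff_nonneg F1 F2 a b)

lemma abs_boole_isStrongHom_sub_le {α β : Type} [Fintype α] (H : SimpleGraph α)
    (F1 F2 : SimpleGraph β) (ψ : α → β) :
    |(if IsStrongHom H F1 ψ then (1:ℝ) else 0) - (if IsStrongHom H F2 ψ then 1 else 0)| ≤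
      ∑ p : α × α, adjDiff F1 F2 (ψ p.1) (ψ p.2) := by
  have witness : ∀ {G1 G2 : SimpleGraph β}, IsStrongHom H G1 ψ → ¬IsStrongHom H G2 ψ →
      ∃ p : α × α, ¬(G1.Adj (ψ p.1) (ψ p.2) ↔ G2.Adj (ψ p.1) (ψ p.2)) := by
    intro G1 G2 h1 h2
    obtain ⟨u, v, huv⟩ : ∃ u v, ¬(H.Adj u v ↔ G2.Adj (ψ u) (ψ v)) := by
      simpa [IsStrongHom] using h2
    exact ⟨(u, v), fun h => huv ((h1 u v).trans h)⟩
  have le_sum : ∀ p : α × α, adjDiff F1 F2 (ψ p.1) (ψ p.2) ≤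
      ∑ p : α × α, adjDiff F1 F2 (ψ p.1) (ψ p.2) :=
    fun p => single_le_sum (fun q _ => adjDiff_nonneg F1 F2 (ψ q.1) (ψ q.2)) (mem_univ p)
  split_ifs with h1 h2 h2
  · simpa using sum_nonneg fun p _ => adjDiff_nonneg F1 F2 (ψ p.1) (ψ p.2)
  · obtain ⟨p, hp⟩ := witness h1 h2
    simpa [adjDiff_eq_one hp] using le_sum p
  · obtain ⟨p, hp⟩ := witness h2 h1
    simpa [adjDiff_eq_one (fun h => hp h.symm)] using le_sum p
  · simpa using sum_nonneg fun p _ => adjDiff_nonneg F1 F2 (ψ p.1) (ψ p.2)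

lemma sum_prod_filter_pair_eq_mul {α β R : Type} [Fintype α] [Fintype β] [CommSemiring R]
    {μ : β → R} (hμ : ∑ b, μ b = 1) {u v : α} (huv : u ≠ v) (a b : β) :
    ∑ ψ ∈ univ.filter (fun ψ : α → β => (ψ u, ψ v) = (a, b)), ∏ w, μ (ψ w) = μ a * μ b := by
  let t : α → Finset β := fun w => if w = u then {a} else if w = v then {b} else univ
  have hfilter : univ.filter (fun ψ : α → β => (ψ u, ψ v) = (a, b)) = Fintype.piFinset t := by
    ext ψ
    simp only [mem_filter, mem_univ, true_and, Prod.mk.injEq, Fintype.mem_piFinset, t]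
    refine ⟨fun ⟨ha, hb⟩ w => ?_, fun h => ⟨by simpa using h u, by simpa [huv.symm] using h v⟩⟩
    split_ifs with hu hv
    · simp [hu, ha]
    · simp [hv, hb]
    · exact mem_univ _
  have hfactor : ∀ w, ∑ x ∈ t w, μ x =
      (if w = u then μ a else 1) * (if w = v then μ b else 1) := by
    intro w
    by_cases hu : w = u
    · simp [t, hu, huv]
    · by_cases hv : w = v <;> simp [t, hu, hv, hμ, huv.symm]
  rw [hfilter, ← prod_univ_sum, prod_congr rfl fun w _ => hfactor w, prod_mul_distrib,
    Fintype.prod_ite_eq', Fintype.prod_ite_eq']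

lemma sum_prod_mul_apply_apply {α β R : Type} [Fintype α] [Fintype β] [CommSemiring R]
    {μ : β → R} (hμ : ∑ b, μ b = 1) {u v : α} (huv : u ≠ v) (f : β → β → R) :
    ∑ ψ : α → β, (∏ w, μ (ψ w)) * f (ψ u) (ψ v) = ∑ a, ∑ b, μ a * μ b * f a b := by
  rw [← sum_fiberwise univ (fun ψ : α → β => (ψ u, ψ v)), Fintype.sum_prod_type]
  refine sum_congr rfl fun a _ => sum_congr rfl fun b _ => ?_
  rw [← sum_prod_filter_pair_eq_mul hμ huv a b, sum_mul]
  refine sum_congr rfl fun ψ hψ => ?_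
  obtain ⟨rfl, rfl⟩ := Prod.mk.inj (mem_filter.1 hψ).2
  rfl

lemma sum_prod_mul_adjDiff_le {α β : Type} [Fintype α] [Fintype β] (F1 F2 : SimpleGraph β)
    {μ : β → ℝ} (hμ0 : ∀ b, 0 ≤ μ b) (hμ : ∑ b, μ b = 1) (u v : α) :
    ∑ ψ : α → β, (∏ w, μ (ψ w)) * adjDiff F1 F2 (ψ u) (ψ v) ≤ weightedL1Dist F1 F2 μ := by
  by_cases huv : u = v
  · simpa [huv] using weightedL1Dist_nonneg F1 F2 hμ0
  · exact (sum_prod_mul_apply_apply hμ huv _).le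

lemma abs_sdensity_sub_le {α β : Type} [Fintype α] [Fintype β] (H : SimpleGraph α)
    (F1 F2 : SimpleGraph β) {μ : β → ℝ} (hμ0 : ∀ b, 0 ≤ μ b) (hμ : ∑ b, μ b = 1) :
    |sdensity H F1 μ - sdensity H F2 μ| ≤
      (Fintype.card α : ℝ) ^ 2 * weightedL1Dist F1 F2 μ := by
  have hprod : ∀ ψ : α → β, 0 ≤ ∏ w, μ (ψ w) := fun ψ => prod_nonneg fun w _ => hμ0 (ψ w)
  calc |sdensity H F1 μ - sdensity H F2 μ|
      = |∑ ψ : α → β, (∏ w, μ (ψ w)) *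
          ((if IsStrongHom H F1 ψ then 1 else 0) - (if IsStrongHom H F2 ψ then 1 else 0))| := by
        simp only [sdensity, ← sum_sub_distrib, mul_sub, mul_boole]
    _ ≤ ∑ ψ : α → β, (∏ w, μ (ψ w)) *
          |(if IsStrongHom H F1 ψ then 1 else 0) - (if IsStrongHom H F2 ψ then 1 else 0)| := by
        refine (abs_sum_le_sum_abs _ _).trans_eq (sum_congr rfl fun ψ _ => ?_)
        rw [abs_mul, abs_of_nonneg (hprod ψ)]
    _ ≤ ∑ ψ : α → β, (∏ w, μ (ψ w)) * ∑ p : α × α, adjDiff F1 F2 (ψ p.1) (ψ p.2) := by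
        gcongr with ψ
        · exact hprod ψ
        · exact abs_boole_isStrongHom_sub_le H F1 F2 ψ
    _ = ∑ p : α × α, ∑ ψ : α → β, (∏ w, μ (ψ w)) * adjDiff F1 F2 (ψ p.1) (ψ p.2) := by
        simp only [mul_sum]
        exact sum_comm
    _ ≤ ∑ _p : α × α, weightedL1Dist F1 F2 μ :=
        sum_le_sum fun p _ => sum_prod_mul_adjDiff_le F1 F2 hμ0 hμ p.1 p.2
    _ = (Fintype.card α : ℝ) ^ 2 * weightedL1Dist F1 F2 μ := by
        simp [Fintype.card_prod, sq]

def twinSetoid {β : Type} (G : SimpleGraph β) : Setoid β where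
  r u v := ∀ w, G.Adj u w ↔ G.Adj v w
  iseqv := ⟨fun _ _ => Iff.rfl, fun h w => (h w).symm, fun h1 h2 w => (h1 w).trans (h2 w)⟩

def twinQuotient {β : Type} (G : SimpleGraph β) : SimpleGraph (Quotient (twinSetoid G)) where
  Adj := Quotient.lift₂ G.Adj fun _ v u' v' hu hv =>
    propext ((hu v).trans <| (G.adj_comm u' v).trans <| (hv u').trans (G.adj_comm v' u'))
  symm := ⟨fun x y => Quotient.inductionOn₂ x y fun _ _ h => G.adj_symm h⟩
  loopless := ⟨fun x => Quotient.inductionOn x fun _ h => G.irrefl h⟩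

lemma isStrongHom_twinQuotient_mk {β : Type} (G : SimpleGraph β) :
    IsStrongHom G (twinQuotient G) (Quotient.mk _) :=
  fun _ _ => Iff.rfl

lemma isTwinFree_twinQuotient {β : Type} (G : SimpleGraph β) : IsTwinFree (twinQuotient G) :=
  fun x y => Quotient.inductionOn₂ x y fun _ _ h => Quotient.sound fun w => h ⟦w⟧

lemma sum_filter_comp_eq_sum_filter_sum {δ β Q R : Type} [Fintype δ] [Fintype β]
    [AddCommMonoid R] (p : δ → β) (q : β → Q) (μ : δ → R) (t : Q) :
    ∑ a ∈ univ.filter (fun a => (q ∘ p) a = t), μ a =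
      ∑ u ∈ univ.filter (fun u => q u = t), ∑ a ∈ univ.filter (fun a => p a = u), μ a := by
  rw [← sum_fiberwise_of_maps_to (g := p) (t := univ.filter (fun u => q u = t)) (by simp)]
  refine sum_congr rfl fun _ hu => sum_congr ?_ fun _ _ => rfl
  ext a
  simp only [mem_filter, mem_univ, true_and, Function.comp_apply] at hu ⊢
  exact ⟨And.right, fun h => ⟨h ▸ hu, h⟩⟩

lemma WEquiv.of_isTwinFree {α β Q : Type} [Fintype α] [Fintype β] [Fintype Q]
    {G1 : SimpleGraph α} {μ1 : α → ℝ} {G2 : SimpleGraph β} {μ2 : β → ℝ}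
    {T : SimpleGraph Q} (hT : IsTwinFree T) {π1 : α → Q} {π2 : β → Q}
    (hπ1 : IsStrongHom G1 T π1) (hπ2 : IsStrongHom G2 T π2)
    (hs1 : Function.Surjective π1) (hs2 : Function.Surjective π2)
    (hfiber : ∀ q, ∑ u ∈ univ.filter (fun u => π1 u = q), μ1 u =
      ∑ u ∈ univ.filter (fun u => π2 u = q), μ2 u) :
    WEquiv G1 μ1 G2 μ2 := by
  let e := Fintype.equivFin Q
  refine ⟨Fintype.card Q, T.comap e.symm, e ∘ π1, e ∘ π2, fun x y h => ?_, ?_, ?_,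
    e.surjective.comp hs1, e.surjective.comp hs2, fun t => ?_⟩
  · exact e.symm.injective (hT _ _ fun w => by simpa using h (e w))
  · simpa [IsStrongHom] using hπ1
  · simpa [IsStrongHom] using hπ2
  · simpa [← Equiv.eq_symm_apply] using hfiber (e.symm t)

lemma WEquiv.of_surjective {δ β : Type} [Fintype δ] [Fintype β]
    {F : SimpleGraph δ} {G : SimpleGraph β} {p : δ → β} (hp : IsStrongHom F G p)
    (hsurj : Function.Surjective p) (μF : δ → ℝ) (μG : β → ℝ)
    (hfiber : ∀ u, ∑ a ∈ univ.filter (fun a => p a = u), μF a = μG u) :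
    WEquiv F μF G μG := by
  have : Fintype (Quotient (twinSetoid G)) := Quotient.fintype _
  refine WEquiv.of_isTwinFree (isTwinFree_twinQuotient G)
    (((isStrongHom_twinQuotient_mk G).comp_iff p).2 hp) (isStrongHom_twinQuotient_mk G)
    (Quotient.mk_surjective.comp hsurj) Quotient.mk_surjective fun q => ?_
  rw [sum_filter_comp_eq_sum_filter_sum p (Quotient.mk _)]
  simp only [hfiber]

lemma WEquiv.comap_fst {δ β γ : Type} [Fintype δ] [Fintype β] [Fintype γ]
    (G : SimpleGraph β) (e : δ ≃ β × γ) (μ : β → ℝ) {ν : γ → ℝ} (hν : ∑ c, ν c = 1) :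
    WEquiv (G.comap fun x => (e x).1) (fun x => μ (e x).1 * ν (e x).2) G μ := by
  obtain ⟨c⟩ : Nonempty γ := by
    by_contra h
    simp [not_nonempty_iff.1 h] at hν
  refine WEquiv.of_surjective (p := fun x => (e x).1) (fun _ _ => Iff.rfl)
    (fun b => ⟨e.symm (b, c), by simp⟩) _ _ fun b => ?_
  rw [sum_filter, Equiv.sum_comp e fun y => if y.1 = b then μ y.1 * ν y.2 else 0,
    Fintype.sum_prod_type]
  simp [← mul_sum, hν]

lemma exists_commensurable {β γ : Type} [Fintype β] [Fintype γ]
    (G1 : SimpleGraph β) {μ1 : β → ℝ} (G2 : SimpleGraph γ) {μ2 : γ → ℝ}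
    (h1 : IsWeight μ1) (h2 : IsWeight μ2) :
    ∃ (m : ℕ) (F1 F2 : SimpleGraph (Fin m)) (μ : Fin m → ℝ),
      IsWeight μ ∧ WEquiv F1 μ G1 μ1 ∧ WEquiv F2 μ G2 μ2 := by
  let e := (Fintype.equivFin (β × γ)).symm
  refine ⟨_, G1.comap fun x => (e x).1, G2.comap fun x => (e x).2,
    fun x => μ1 (e x).1 * μ2 (e x).2, ⟨fun x => mul_pos (h1.1 _) (h2.1 _), ?_⟩,
    WEquiv.comap_fst G1 e μ1 h2.2, ?_⟩
  · rw [Equiv.sum_comp e fun y => μ1 y.1 * μ2 y.2, Fintype.sum_prod_type, ← h1.2]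
    simp [← mul_sum, h2.2]
  · convert WEquiv.comap_fst G2 (e.trans (Equiv.prodComm β γ)) μ2 h1.2 using 2
    · rfl
    · exact mul_comm (μ1 (e _).1) (μ2 (e _).2)

lemma le_mul_csInf_of_forall {S : Set ℝ} (hS : S.Nonempty) {a c : ℝ} (hc : 0 ≤ c)
    (h : ∀ x ∈ S, a ≤ c * x) : a ≤ c * sInf S := by
  rw [← smul_eq_mul, ← Real.sInf_smul_of_nonneg hc]
  exact le_csInf hS.smul_set fun _ ⟨x, hx, hy⟩ => hy ▸ h x hx

theorem stmt12 {α β γ : Type} [Fintype α] [Fintype β] [Fintype γ]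
    (H : SimpleGraph α) (G1 : SimpleGraph β) (μ1 : β → ℝ) (G2 : SimpleGraph γ)
    (μ2 : γ → ℝ) (h1 : IsWeight μ1) (h2 : IsWeight μ2) :
    |sdensity H G1 μ1 - sdensity H G2 μ2| ≤
      (Fintype.card α : ℝ) ^ 2 * d1dist G1 μ1 G2 μ2 := by
  unfold d1dist
  refine le_mul_csInf_of_forall ?_ (by positivity) ?_
  · obtain ⟨m, F1, F2, μ, hμ, hF1, hF2⟩ := exists_commensurable G1 G2 h1 h2
    exact ⟨_, m, F1, F2, μ, hμ, hF1, hF2, rfl⟩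
  · rintro _ ⟨m, F1, F2, μ, hμ, hF1, hF2, rfl⟩
    rw [← hF1.sdensity_eq H, ← hF2.sdensity_eq H]
    exact abs_sdensity_sub_le H F1 F2 (fun x => (hμ.1 x).le) hμ.2
end
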